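/- arXiv:0810.5261 — 2 statements merged into one kernel-verified Lean document; each statement's English description precedes it below -/
import Mathlib

section
/- Let F be a Fréchet space whose topology is given by a countable family of seminorms {pᵢ}, realized as the projective limit of Banach spaces {Eᵢ, ρⱼᵢ} with limit maps ρᵢ : F → Eᵢ. Suppose Φ : ℝ × F × F → F is the projective limit of maps Φᵢ : ℝ × Eᵢ × Eᵢ → Eᵢ, each k-Lipschitz in the last two variables uniformly in t, and (t₀, x₀, y₀) are initial data with M = sup{ (pᵢ(y₀)² + pᵢ(Φ(t, x₀, y₀))²)^{1/2} : i ∈ ℕ, t ∈ [t₀−τ, t₀+τ] } < ∞. Then with a = min{τ, 1/(M+k)}, the second-order initial value problem x'' = Φ(t, x, x'), x(t₀) = x₀, x'(t₀) = y₀ has a unique C² solution x : [t₀−a, t₀+a] → F, obtained as the projective limit of the unique solutions xᵢ on the Banach factors. -/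
/-!
Each `Φᵢ` is Lipschitz on the whole space, so on every Banach factor the Picard iterates of the
first-order system `z' = (y, Φᵢ(t, x, y))` differ by `O((K |t - t₀|)ⁿ / n!)` and converge uniformly
on every compact interval to a solution. The iterates of the different factors are compatible: by
induction each of them is a compatible family, hence lifts to `F` where `Φ` lives, and the
connecting maps commute with the integrals. Passing to the limit, the Banach solutions form a
compatible family and lift to a solution in `F`. Uniqueness holds factorwise by the Banach-space
uniqueness theorem, and the `ρᵢ` separate the points of `F`.
-/

open Filter Function Set Topology MeasureTheory
open scoped Interval NNReal Nat

lemma continuous_comp_curve {X Y Z : Type*} [TopologicalSpace X] [TopologicalSpace Y]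
    [TopologicalSpace Z] {f : X → Y → Z} (hf : Continuous (uncurry f)) {α : X → Y}
    (hα : Continuous α) : Continuous fun t ↦ f t (α t) :=
  hf.comp (continuous_id.prodMk hα)

lemma tendstoUniformlyOn_comp_of_lipschitzWith {α ι E : Type*} [PseudoMetricSpace E]
    {l : Filter ι} {f : α → E → E} {K : ℝ≥0} (hK : ∀ t, LipschitzWith K (f t))
    {F : ι → α → E} {g : α → E} {s : Set α} (hF : TendstoUniformlyOn F g l s) :
    TendstoUniformlyOn (fun n t ↦ f t (F n t)) (fun t ↦ f t (g t)) l s := by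
  rw [Metric.tendstoUniformlyOn_iff] at hF ⊢
  intro ε hε
  filter_upwards [hF (ε / (K + 1)) (by positivity)] with n hn t ht
  calc dist (f t (g t)) (f t (F n t)) ≤ K * dist (g t) (F n t) := (hK t).dist_le_mul _ _
    _ ≤ K * (ε / (K + 1)) := by gcongr; exact (hn t ht).le
    _ < ε := by
      rw [← mul_div_assoc, div_lt_iff₀ (by positivity)]
      linarith

namespace ODE

section Picard

variable {E : Type*} [NormedAddCommGroup E] [NormedSpace ℝ E]

lemma norm_integral_le_pow_div_factorial {g : ℝ → E} {c t₀ t : ℝ} (n : ℕ)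
    (h : ∀ s ∈ Ι t₀ t, ‖g s‖ ≤ c * |s - t₀| ^ n / n !) :
    ‖∫ s in t₀..t, g s‖ ≤ c * |t - t₀| ^ (n + 1) / (n + 1)! :=
  calc ‖∫ s in t₀..t, g s‖ = ‖∫ s in Ι t₀ t, g s‖ :=
        intervalIntegral.norm_intervalIntegral_eq _ _ _ _
    _ ≤ ∫ s in Ι t₀ t, c * |s - t₀| ^ n / n ! :=
      norm_integral_le_of_norm_le (Continuous.integrableOn_uIoc (by fun_prop))
        (ae_restrict_of_forall_mem measurableSet_uIoc h)
    _ = c * |t - t₀| ^ (n + 1) / (n + 1)! := by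
      rw [integral_div, integral_const_mul, integral_pow_abs_sub_uIoc, Nat.factorial_succ]
      push_cast
      field_simp

variable {f : ℝ → E → E} {K : ℝ≥0} {t₀ a b : ℝ} {x₀ : E}

noncomputable def picardIter (f : ℝ → E → E) (t₀ : ℝ) (x₀ : E) : ℕ → ℝ → E
  | 0 => fun _ ↦ x₀
  | n + 1 => picard f t₀ x₀ (picardIter f t₀ x₀ n)

lemma picardIter_succ (n : ℕ) :
    picardIter f t₀ x₀ (n + 1) = picard f t₀ x₀ (picardIter f t₀ x₀ n) :=
  rfl

lemma picardIter_apply₀ (n : ℕ) : picardIter f t₀ x₀ n t₀ = x₀ := by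
  cases n with
  | zero => rfl
  | succ n => rw [picardIter_succ, picard_apply₀]

lemma continuous_picard (hf : Continuous (uncurry f)) {α : ℝ → E} (hα : Continuous α) :
    Continuous (picard f t₀ x₀ α) :=
  continuous_const.add <| intervalIntegral.continuous_primitive
    (fun _ _ ↦ (continuous_comp_curve hf hα).intervalIntegrable _ _) t₀

lemma continuous_picardIter (hf : Continuous (uncurry f)) (n : ℕ) :
    Continuous (picardIter f t₀ x₀ n) := by
  induction n with
  | zero => exact continuous_const
  | succ n ih => rw [picardIter_succ]; exact continuous_picard hf ih

lemma picard_sub_picard (hf : Continuous (uncurry f)) {α β : ℝ → E} (hα : Continuous α)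
    (hβ : Continuous β) (t : ℝ) :
    picard f t₀ x₀ α t - picard f t₀ x₀ β t = ∫ s in t₀..t, (f s (α s) - f s (β s)) := by
  rw [picard_apply, picard_apply, add_sub_add_left_eq_sub, intervalIntegral.integral_sub
    ((continuous_comp_curve hf hα).intervalIntegrable _ _)
    ((continuous_comp_curve hf hβ).intervalIntegrable _ _)]

lemma norm_picardIter_succ_sub_le (hf : Continuous (uncurry f))
    (hK : ∀ t, LipschitzWith K (f t)) (ht₀ : t₀ ∈ Icc a b) {C : ℝ}
    (hC : ∀ s ∈ Icc a b, ‖f s x₀‖ ≤ C) (n : ℕ) {t : ℝ} (ht : t ∈ Icc a b) :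
    ‖picardIter f t₀ x₀ (n + 1) t - picardIter f t₀ x₀ n t‖ ≤
      C * K ^ n * |t - t₀| ^ (n + 1) / (n + 1)! := by
  induction n generalizing t with
  | zero =>
    rw [picardIter_succ, picard_apply, picardIter, add_sub_cancel_left]
    refine norm_integral_le_pow_div_factorial 0 fun s hs ↦ ?_
    simpa using hC s (uIcc_subset_Icc ht₀ ht (uIoc_subset_uIcc hs))
  | succ n ih =>
    have hsub : picardIter f t₀ x₀ (n + 2) t - picardIter f t₀ x₀ (n + 1) t =
        ∫ s in t₀..t, (f s (picardIter f t₀ x₀ (n + 1) s) - f s (picardIter f t₀ x₀ n s)) :=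
      picard_sub_picard hf (continuous_picardIter hf _) (continuous_picardIter hf _) t
    rw [hsub]
    refine norm_integral_le_pow_div_factorial (n + 1) fun s hs ↦ ?_
    calc ‖f s (picardIter f t₀ x₀ (n + 1) s) - f s (picardIter f t₀ x₀ n s)‖
        ≤ K * ‖picardIter f t₀ x₀ (n + 1) s - picardIter f t₀ x₀ n s‖ := by
          simpa only [dist_eq_norm] using (hK s).dist_le_mul _ _
      _ ≤ K * (C * K ^ n * |s - t₀| ^ (n + 1) / (n + 1)!) := by
          gcongr
          exact ih (uIcc_subset_Icc ht₀ ht (uIoc_subset_uIcc hs))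
      _ = C * K ^ (n + 1) * |s - t₀| ^ (n + 1) / (n + 1)! := by ring

theorem exists_tendstoUniformlyOn_picardIter [CompleteSpace E] (hf : Continuous (uncurry f))
    (hK : ∀ t, LipschitzWith K (f t)) (ht₀ : t₀ ∈ Icc a b) :
    ∃ α, TendstoUniformlyOn (picardIter f t₀ x₀) α atTop (Icc a b) := by
  obtain ⟨C, hC⟩ := isCompact_Icc.exists_bound_of_continuousOn
    (continuous_comp_curve hf (continuous_const (y := x₀))).continuousOn
  have hC₀ : 0 ≤ C := (norm_nonneg _).trans (hC t₀ ht₀)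
  have hba : 0 ≤ b - a := by linarith [ht₀.1, ht₀.2]
  set d : ℕ → ℝ := fun n ↦ C * (b - a) * ((K * (b - a)) ^ n / n !)
  have hd : Summable d := (Real.summable_pow_div_factorial _).mul_left _
  have hdist : ∀ n, ∀ t ∈ Icc a b,
      ‖picardIter f t₀ x₀ (n + 1) t - picardIter f t₀ x₀ n t‖ ≤ d n := by
    intro n t ht
    have htt₀ : |t - t₀| ≤ b - a :=
      abs_sub_le_iff.2 ⟨by linarith [ht.2, ht₀.1], by linarith [ht.1, ht₀.2]⟩
    calc _ ≤ C * K ^ n * |t - t₀| ^ (n + 1) / (n + 1)! :=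
          norm_picardIter_succ_sub_le hf hK ht₀ hC n ht
      _ ≤ C * K ^ n * (b - a) ^ (n + 1) / n ! := by
          gcongr
          exact n.le_succ
      _ = d n := by simp only [d]; rw [mul_pow]; ring
  -- Weierstrass M-test for the telescoping series `x₀ + ∑ₙ (αₙ₊₁ - αₙ)` of the iterates.
  have hsum := (tendsto_const_nhds (x := x₀)).tendstoUniformlyOn_const (Icc a b) |>.add
    (tendstoUniformlyOn_tsum_nat hd hdist)
  refine ⟨_, hsum.congr (Eventually.of_forall fun N t _ ↦ ?_)⟩
  change x₀ + ∑ n ∈ Finset.range N, (picardIter f t₀ x₀ (n + 1) t - picardIter f t₀ x₀ n t) = _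
  rw [Finset.sum_range_sub (fun n ↦ picardIter f t₀ x₀ n t)]
  exact add_sub_cancel x₀ _

theorem hasDerivWithinAt_of_tendstoUniformlyOn_picardIter [CompleteSpace E]
    (hf : Continuous (uncurry f)) (hK : ∀ t, LipschitzWith K (f t)) (ht₀ : t₀ ∈ Icc a b)
    {α : ℝ → E} (hα : TendstoUniformlyOn (picardIter f t₀ x₀) α atTop (Icc a b)) {t : ℝ}
    (ht : t ∈ Icc a b) : HasDerivWithinAt α (f t (α t)) (Icc a b) t := by
  have hαc : ContinuousOn α (Icc a b) :=
    hα.continuousOn (Frequently.of_forall fun n ↦ (continuous_picardIter hf n).continuousOn)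
  have hfix : EqOn α (picard f t₀ x₀ α) (Icc a b) := by
    intro t ht
    have hcomp := tendstoUniformlyOn_comp_of_lipschitzWith hK (hα.mono (uIcc_subset_Icc ht₀ ht))
    refine tendsto_nhds_unique ((hα.tendsto_at ht).comp (tendsto_add_atTop_nat 1)) ?_
    exact tendsto_const_nhds.add (hcomp.tendsto_intervalIntegral_of_continuousOn
      (Eventually.of_forall fun n ↦
        (continuous_comp_curve hf (continuous_picardIter hf n)).continuousOn))
  exact (hasDerivWithinAt_picard_Icc ht₀ hf.continuousOn hαc (fun _ _ ↦ mem_univ _) x₀ ht).congr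
    hfix (hfix ht)

theorem eqOn_Icc_of_hasDerivWithinAt {v : ℝ → E → E} (hv : ∀ t, LipschitzWith K (v t))
    {α β : ℝ → E} {r : ℝ}
    (hα : ∀ t ∈ Icc (t₀ - r) (t₀ + r),
      HasDerivWithinAt α (v t (α t)) (Icc (t₀ - r) (t₀ + r)) t)
    (hβ : ∀ t ∈ Icc (t₀ - r) (t₀ + r),
      HasDerivWithinAt β (v t (β t)) (Icc (t₀ - r) (t₀ + r)) t)
    (h₀ : α t₀ = β t₀) : EqOn α β (Icc (t₀ - r) (t₀ + r)) := by
  rcases le_or_gt r 0 with hr | hr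
  · intro t ht
    obtain rfl : t = t₀ := by linarith [ht.1, ht.2]
    exact h₀
  have hderiv : ∀ γ : ℝ → E, (∀ t ∈ Icc (t₀ - r) (t₀ + r),
      HasDerivWithinAt γ (v t (γ t)) (Icc (t₀ - r) (t₀ + r)) t) →
      ∀ t ∈ Ioo (t₀ - r) (t₀ + r), HasDerivAt γ (v t (γ t)) t :=
    fun γ hγ t ht ↦ (hγ t (Ioo_subset_Icc_self ht)).hasDerivAt (Icc_mem_nhds ht.1 ht.2)
  exact ODE_solution_unique_of_mem_Icc (s := fun _ ↦ univ) (fun t _ ↦ (hv t).lipschitzOnWith)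
    ⟨by linarith, by linarith⟩ (HasDerivWithinAt.continuousOn hα) (hderiv α hα)
    (fun _ _ ↦ mem_univ _) (HasDerivWithinAt.continuousOn hβ) (hderiv β hβ)
    (fun _ _ ↦ mem_univ _) h₀

end Picard

end ODE

section ProjectiveSystem

open ODE

variable {ι : Type*} {G : ι → Type*} [∀ i, NormedAddCommGroup (G i)]
  [∀ i, NormedSpace ℝ (G i)] {H : Type*} {σ : ∀ i, H → G i} {f : ∀ i, ℝ → G i → G i}
  {g : ℝ → H → H}

theorem eqOn_of_forall_hasDerivWithinAt (hσ : ∀ w w', (∀ i, σ i w = σ i w') → w = w')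
    (hfg : ∀ i t w, f i t (σ i w) = σ i (g t w)) {K : ι → ℝ≥0}
    (hK : ∀ i t, LipschitzWith (K i) (f i t)) {W W' : ℝ → H} {t₀ r : ℝ}
    (hW : ∀ i, ∀ t ∈ Icc (t₀ - r) (t₀ + r), HasDerivWithinAt (fun s ↦ σ i (W s))
      (σ i (g t (W t))) (Icc (t₀ - r) (t₀ + r)) t)
    (hW' : ∀ i, ∀ t ∈ Icc (t₀ - r) (t₀ + r), HasDerivWithinAt (fun s ↦ σ i (W' s))
      (σ i (g t (W' t))) (Icc (t₀ - r) (t₀ + r)) t)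
    (h₀ : W t₀ = W' t₀) : EqOn W W' (Icc (t₀ - r) (t₀ + r)) := fun _ ht ↦
  hσ _ _ fun i ↦ eqOn_Icc_of_hasDerivWithinAt (hK i) (fun s hs ↦ hfg i s (W s) ▸ hW i s hs)
    (fun s hs ↦ hfg i s (W' s) ▸ hW' i s hs) (congrArg (σ i) h₀) ht

variable [Preorder ι]

def IsCompatible (π : ∀ {i j : ι}, i ≤ j → G j →L[ℝ] G i) (z : ∀ i, G i) : Prop :=
  ∀ ⦃i j : ι⦄ (h : i ≤ j), π h (z j) = z i

variable {π : ∀ {i j : ι}, i ≤ j → G j →L[ℝ] G i}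

lemma isCompatible_of_tendsto {β : Type*} {l : Filter β} [l.NeBot] {z : β → ∀ i, G i}
    {y : ∀ i, G i} (hz : ∀ n, IsCompatible π (z n))
    (hy : ∀ i, Tendsto (fun n ↦ z n i) l (𝓝 (y i))) : IsCompatible π y := fun _ j h ↦
  tendsto_nhds_unique ((((π h).continuous.tendsto _).comp (hy j)).congr fun n ↦ hz n h) (hy _)

theorem isCompatible_picardIter [∀ i, CompleteSpace (G i)]
    (hπσ : ∀ ⦃i j : ι⦄ (h : i ≤ j) w, π h (σ j w) = σ i w)
    (hlift : ∀ z, IsCompatible π z → ∃ w, ∀ i, σ i w = z i)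
    (hfg : ∀ i t w, f i t (σ i w) = σ i (g t w)) (hf : ∀ i, Continuous (uncurry (f i)))
    (t₀ : ℝ) (w₀ : H) (n : ℕ) (t : ℝ) :
    IsCompatible π fun i ↦ picardIter (f i) t₀ (σ i w₀) n t := by
  induction n generalizing t with
  | zero => exact fun i j h ↦ hπσ h w₀
  | succ n ih =>
    choose W hW using fun s ↦ hlift _ (ih s)
    intro i j h
    have hint := (continuous_comp_curve (hf j) (continuous_picardIter (t₀ := t₀)
      (x₀ := σ j w₀) (hf j) n)).intervalIntegrable (μ := volume) t₀ t
    dsimp only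
    rw [picardIter_succ, picardIter_succ, picard_apply, picard_apply, map_add, hπσ,
      ← ContinuousLinearMap.intervalIntegral_comp_comm _ hint]
    congr 1
    refine intervalIntegral.integral_congr fun s _ ↦ ?_
    simp only [← hW s, hfg, hπσ]

theorem exists_forall_hasDerivWithinAt_of_isCompatible [∀ i, CompleteSpace (G i)]
    (hπσ : ∀ ⦃i j : ι⦄ (h : i ≤ j) w, π h (σ j w) = σ i w)
    (hlift : ∀ z, IsCompatible π z → ∃ w, ∀ i, σ i w = z i)
    (hfg : ∀ i t w, f i t (σ i w) = σ i (g t w)) (hf : ∀ i, Continuous (uncurry (f i)))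
    {K : ι → ℝ≥0} (hK : ∀ i t, LipschitzWith (K i) (f i t)) {t₀ a b : ℝ}
    (ht₀ : t₀ ∈ Icc a b) (w₀ : H) :
    ∃ W : ℝ → H, (∀ i, σ i (W t₀) = σ i w₀) ∧ ∀ i, ∀ t ∈ Icc a b,
      HasDerivWithinAt (fun s ↦ σ i (W s)) (σ i (g t (W t))) (Icc a b) t := by
  choose α hα using fun i ↦
    exists_tendstoUniformlyOn_picardIter (x₀ := σ i w₀) (hf i) (hK i) ht₀
  have hW : ∀ t, ∃ w, t ∈ Icc a b → ∀ i, σ i w = α i t := by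
    intro t
    by_cases ht : t ∈ Icc a b
    · obtain ⟨w, hw⟩ := hlift _ <| isCompatible_of_tendsto
        (fun n ↦ isCompatible_picardIter hπσ hlift hfg hf t₀ w₀ n t)
        fun i ↦ (hα i).tendsto_at ht
      exact ⟨w, fun _ ↦ hw⟩
    · exact ⟨w₀, fun h ↦ (ht h).elim⟩
  choose W hW using hW
  refine ⟨W, fun i ↦ ?_, fun i t ht ↦ ?_⟩
  · rw [hW t₀ ht₀ i]
    refine tendsto_nhds_unique ((hα i).tendsto_at ht₀) ?_
    simp only [picardIter_apply₀, tendsto_const_nhds]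
  · rw [← hfg, hW t ht i]
    exact (hasDerivWithinAt_of_tendstoUniformlyOn_picardIter (hf i) (hK i) ht₀ (hα i) ht).congr
      (fun s hs ↦ hW s hs i) (hW t ht i)

end ProjectiveSystem

lemma HasDerivWithinAt.fst {E F : Type*} [NormedAddCommGroup E] [NormedSpace ℝ E]
    [NormedAddCommGroup F] [NormedSpace ℝ F] {γ : ℝ → E × F} {γ' : E × F} {s : Set ℝ} {t : ℝ}
    (h : HasDerivWithinAt γ γ' s t) : HasDerivWithinAt (fun u ↦ (γ u).1) γ'.1 s t :=
  (hasFDerivAt_fst (𝕜 := ℝ) (p := γ t)).comp_hasDerivWithinAt t h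

lemma HasDerivWithinAt.snd {E F : Type*} [NormedAddCommGroup E] [NormedSpace ℝ E]
    [NormedAddCommGroup F] [NormedSpace ℝ F] {γ : ℝ → E × F} {γ' : E × F} {s : Set ℝ} {t : ℝ}
    (h : HasDerivWithinAt γ γ' s t) : HasDerivWithinAt (fun u ↦ (γ u).2) γ'.2 s t :=
  (hasFDerivAt_snd (𝕜 := ℝ) (p := γ t)).comp_hasDerivWithinAt t h

def secondOrderField {V : Type*} (Φ : ℝ → V → V → V) (t : ℝ) (z : V × V) : V × V :=
  (z.2, Φ t z.1 z.2)

lemma continuous_uncurry_secondOrderField {V : Type*} [TopologicalSpace V] {Φ : ℝ → V → V → V}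
    (hΦ : Continuous fun q : ℝ × V × V ↦ Φ q.1 q.2.1 q.2.2) :
    Continuous (uncurry (secondOrderField Φ)) :=
  continuous_snd.snd.prodMk hΦ

lemma lipschitzWith_secondOrderField {V : Type*} [SeminormedAddCommGroup V]
    {Φ : ℝ → V → V → V} {k t : ℝ}
    (hΦ : ∀ x y x' y' : V, ‖Φ t x y - Φ t x' y'‖ ≤ k * (‖x - x'‖ + ‖y - y'‖)) :
    LipschitzWith (max 1 (2 * k.toNNReal)) (secondOrderField Φ t) := by
  refine LipschitzWith.prod_snd.prodMk (LipschitzWith.of_dist_le_mul fun z z' ↦ ?_)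
  rw [dist_eq_norm, Prod.dist_eq, dist_eq_norm, dist_eq_norm]
  have hsum : ‖z.1 - z'.1‖ + ‖z.2 - z'.2‖ ≤ 2 * max ‖z.1 - z'.1‖ ‖z.2 - z'.2‖ := by
    linarith [le_max_left ‖z.1 - z'.1‖ ‖z.2 - z'.2‖, le_max_right ‖z.1 - z'.1‖ ‖z.2 - z'.2‖]
  calc _ ≤ k * (‖z.1 - z'.1‖ + ‖z.2 - z'.2‖) := hΦ _ _ _ _
    _ ≤ max k 0 * (2 * max ‖z.1 - z'.1‖ ‖z.2 - z'.2‖) :=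
      mul_le_mul (le_max_left k 0) hsum (by positivity) (le_max_right k 0)
    _ = _ := by push_cast [Real.coe_toNNReal']; ring

section FrechetLimit

variable {E : ℕ → Type*} [∀ i, NormedAddCommGroup (E i)] [∀ i, NormedSpace ℝ (E i)]
  {ρc : ∀ {i j : ℕ}, i ≤ j → (E j →L[ℝ] E i)} {F : Type*} [AddCommGroup F] [Module ℝ F]
  {ρ : ∀ i, F →ₗ[ℝ] E i}

lemma eq_of_forall_proj_eq (hcompat : ∀ {i j : ℕ} (h : i ≤ j) (x : F), ρc h (ρ j x) = ρ i x)
    (hlim : ∀ z : ∀ i, E i, (∀ {i j : ℕ} (h : i ≤ j), ρc h (z j) = z i) →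
      ∃! w : F, ∀ i, ρ i w = z i) {u w : F} (h : ∀ i, ρ i u = ρ i w) : u = w :=
  (hlim _ fun h ↦ hcompat h w).unique h fun _ ↦ rfl

lemma exists_prod_lift (hlim : ∀ z : ∀ i, E i, (∀ {i j : ℕ} (h : i ≤ j), ρc h (z j) = z i) →
      ∃! w : F, ∀ i, ρ i w = z i) (z : ∀ i, E i × E i)
    (hz : IsCompatible (fun h ↦ (ρc h).prodMap (ρc h)) z) :
    ∃ w : F × F, ∀ i, (ρ i w.1, ρ i w.2) = z i := by
  obtain ⟨u, hu, -⟩ := hlim (fun i ↦ (z i).1) fun h ↦ congrArg Prod.fst (hz h)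
  obtain ⟨v, hv, -⟩ := hlim (fun i ↦ (z i).2) fun h ↦ congrArg Prod.snd (hz h)
  exact ⟨(u, v), fun i ↦ Prod.ext (hu i) (hv i)⟩

end FrechetLimit

theorem second_order_ode_projective_limit_general
    (E : ℕ → Type*) [∀ i, NormedAddCommGroup (E i)] [∀ i, NormedSpace ℝ (E i)]
    [∀ i, CompleteSpace (E i)]
    (ρc : ∀ {i j : ℕ}, i ≤ j → (E j →L[ℝ] E i))
    (F : Type*) [AddCommGroup F] [Module ℝ F]
    (ρ : ∀ i, F →ₗ[ℝ] E i)
    (hcompat : ∀ {i j : ℕ} (h : i ≤ j) (x : F), ρc h (ρ j x) = ρ i x)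
    (hlim : ∀ z : ∀ i, E i, (∀ {i j : ℕ} (h : i ≤ j), ρc h (z j) = z i) →
      ∃! w : F, ∀ i, ρ i w = z i)
    (Φ : ℝ → F → F → F) (Φi : ∀ i, ℝ → E i → E i → E i)
    (hΦ : ∀ i t x y, ρ i (Φ t x y) = Φi i t (ρ i x) (ρ i y))
    (k : ℝ)
    (hΦcont : ∀ i, Continuous fun q : ℝ × E i × E i => Φi i q.1 q.2.1 q.2.2)
    (hlip : ∀ i t (x y x' y' : E i),
      ‖Φi i t x y - Φi i t x' y'‖ ≤ k * (‖x - x'‖ + ‖y - y'‖))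
    (t₀ : ℝ) (x₀ y₀ : F)
    (a : ℝ) :
    ∃ x y : ℝ → F,
      x t₀ = x₀ ∧ y t₀ = y₀ ∧
      (∀ i, ∀ t ∈ Set.Icc (t₀ - a) (t₀ + a),
        HasDerivWithinAt (fun s => ρ i (x s)) (ρ i (y t)) (Set.Icc (t₀ - a) (t₀ + a)) t ∧
        HasDerivWithinAt (fun s => ρ i (y s)) (ρ i (Φ t (x t) (y t)))
          (Set.Icc (t₀ - a) (t₀ + a)) t) ∧
      (∀ x' y' : ℝ → F, x' t₀ = x₀ → y' t₀ = y₀ →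
        (∀ i, ∀ t ∈ Set.Icc (t₀ - a) (t₀ + a),
          HasDerivWithinAt (fun s => ρ i (x' s)) (ρ i (y' t)) (Set.Icc (t₀ - a) (t₀ + a)) t ∧
          HasDerivWithinAt (fun s => ρ i (y' s)) (ρ i (Φ t (x' t) (y' t)))
            (Set.Icc (t₀ - a) (t₀ + a)) t) →
        Set.EqOn x' x (Set.Icc (t₀ - a) (t₀ + a))) := by
  set σ : ∀ i, F × F → E i × E i := fun i w ↦ (ρ i w.1, ρ i w.2)
  have hσ : ∀ w w', (∀ i, σ i w = σ i w') → w = w' := fun _ _ h ↦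
    Prod.ext (eq_of_forall_proj_eq hcompat hlim fun i ↦ congrArg Prod.fst (h i))
      (eq_of_forall_proj_eq hcompat hlim fun i ↦ congrArg Prod.snd (h i))
  have hfg : ∀ i t w, secondOrderField (Φi i) t (σ i w) = σ i (secondOrderField Φ t w) :=
    fun i t w ↦ by simp [σ, secondOrderField, hΦ]
  have hK := fun i t ↦ lipschitzWith_secondOrderField (hlip i t)
  -- Radius `|a|` so that the interval contains `t₀` even when `a < 0`.
  have hJ : Icc (t₀ - a) (t₀ + a) ⊆ Icc (t₀ - |a|) (t₀ + |a|) :=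
    Icc_subset_Icc (by linarith [le_abs_self a]) (by linarith [le_abs_self a])
  obtain ⟨W, hW₀, hW⟩ := exists_forall_hasDerivWithinAt_of_isCompatible (σ := σ)
    (π := fun h ↦ (ρc h).prodMap (ρc h))
    (fun _ _ h w ↦ Prod.ext (hcompat h w.1) (hcompat h w.2))
    (exists_prod_lift hlim) hfg (fun i ↦ continuous_uncurry_secondOrderField (hΦcont i)) hK
    (t₀ := t₀) (a := t₀ - |a|) (b := t₀ + |a|) (by simp) (x₀, y₀)
  replace hW₀ : W t₀ = (x₀, y₀) := hσ _ _ hW₀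
  have hsol : ∀ i, ∀ t ∈ Icc (t₀ - a) (t₀ + a), HasDerivWithinAt (fun s ↦ σ i (W s))
      (σ i (secondOrderField Φ t (W t))) (Icc (t₀ - a) (t₀ + a)) t :=
    fun i t ht ↦ (hW i t (hJ ht)).mono hJ
  refine ⟨fun t ↦ (W t).1, fun t ↦ (W t).2, congrArg Prod.fst hW₀, congrArg Prod.snd hW₀,
    fun i t ht ↦ ⟨(hsol i t ht).fst, (hsol i t ht).snd⟩, fun x' y' hx' hy' h' t ht ↦ ?_⟩
  refine congrArg Prod.fst (eqOn_of_forall_hasDerivWithinAt hσ hfg hK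
    (W := fun s ↦ (x' s, y' s)) (fun i s hs ↦ (h' i s hs).1.prodMk (h' i s hs).2) hsol ?_ ht)
  rw [hx', hy', hW₀]

/-- Existence and uniqueness for the second-order ODE `x'' = Φ(t,x,x')` on a Fréchet space
realized as a projective limit of Banach spaces, with the explicit radius
`a = min(τ, 1/(M+k))`, the solution being obtained componentwise on the Banach factors. -/
theorem second_order_ode_projective_limit
    (E : ℕ → Type*) [∀ i, NormedAddCommGroup (E i)] [∀ i, NormedSpace ℝ (E i)]
    [∀ i, CompleteSpace (E i)]
    (ρc : ∀ {i j : ℕ}, i ≤ j → (E j →L[ℝ] E i))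
    (F : Type*) [AddCommGroup F] [Module ℝ F]
    (ρ : ∀ i, F →ₗ[ℝ] E i)
    (hcompat : ∀ {i j : ℕ} (h : i ≤ j) (x : F), ρc h (ρ j x) = ρ i x)
    (hlim : ∀ z : ∀ i, E i, (∀ {i j : ℕ} (h : i ≤ j), ρc h (z j) = z i) →
      ∃! w : F, ∀ i, ρ i w = z i)
    (p : ℕ → F → ℝ) (hp : ∀ i x, p i x = ‖ρ i x‖)
    (Φ : ℝ → F → F → F) (Φi : ∀ i, ℝ → E i → E i → E i)
    (hΦ : ∀ i t x y, ρ i (Φ t x y) = Φi i t (ρ i x) (ρ i y))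
    (k : ℝ)
    (hΦcont : ∀ i, Continuous fun q : ℝ × E i × E i => Φi i q.1 q.2.1 q.2.2)
    (hlip : ∀ i t (x y x' y' : E i),
      ‖Φi i t x y - Φi i t x' y'‖ ≤ k * (‖x - x'‖ + ‖y - y'‖))
    (t₀ τ M : ℝ) (hτ : 0 < τ) (x₀ y₀ : F)
    (hM : ∀ i, ∀ t ∈ Set.Icc (t₀ - τ) (t₀ + τ),
      Real.sqrt ((p i y₀) ^ 2 + (p i (Φ t x₀ y₀)) ^ 2) ≤ M)
    (a : ℝ) (ha : a = min τ (1 / (M + k))) :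
    ∃ x y : ℝ → F,
      x t₀ = x₀ ∧ y t₀ = y₀ ∧
      (∀ i, ∀ t ∈ Set.Icc (t₀ - a) (t₀ + a),
        HasDerivWithinAt (fun s => ρ i (x s)) (ρ i (y t)) (Set.Icc (t₀ - a) (t₀ + a)) t ∧
        HasDerivWithinAt (fun s => ρ i (y s)) (ρ i (Φ t (x t) (y t)))
          (Set.Icc (t₀ - a) (t₀ + a)) t) ∧
      (∀ x' y' : ℝ → F, x' t₀ = x₀ → y' t₀ = y₀ →
        (∀ i, ∀ t ∈ Set.Icc (t₀ - a) (t₀ + a),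
          HasDerivWithinAt (fun s => ρ i (x' s)) (ρ i (y' t)) (Set.Icc (t₀ - a) (t₀ + a)) t ∧
          HasDerivWithinAt (fun s => ρ i (y' s)) (ρ i (Φ t (x' t) (y' t)))
            (Set.Icc (t₀ - a) (t₀ + a)) t) →
        Set.EqOn x' x (Set.Icc (t₀ - a) (t₀ + a))) :=
  second_order_ode_projective_limit_general E ρc F ρ hcompat hlim Φ Φi hΦ k hΦcont hlip t₀ x₀ y₀ a
end

section
/- Let E, E' be Banach spaces, F : U → V a C² diffeomorphism between open sets U ⊆ E, V ⊆ E' with G = F⁻¹. Given α ∈ E'* (the dual) and B ∈ L²ₛ(E', ℝ), define their transforms under the jet change-of-chart rule: α' = α ∘ DG(v) viewed appropriately, and B' = B ∘ (DG(v) × DG(v)) + α ∘ DG(v) ∘ D²F(u) ∘ (DG(v) × DG(v)), where u = G(v). Then if B = α ∘ Γ(u) for a symmetric Γ(u) ∈ L²ₛ(E,E) — i.e., B(e₁,e₂) = α(Γ(u)(e₁,e₂)) — the transform satisfies B' = α' ∘ Γ'(v) where Γ'(v) = D²F(u) ∘ (DG(v) × DG(v)) + DF(u) ∘ Γ(u)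 ∘ (DG(v) × DG(v)). That is, dissection subspaces {α ⊕ α∘Γ(u) : α ∈ E*} are mapped to dissection subspaces under change of chart. -/
/-! Expanding both sides by linearity, the only identity needed is `DG(v) ∘ DF(u) = id`,
which is the chain rule for `G ∘ F = id` near `u`; the `D²F` terms agree verbatim. -/

open Filter Topology

theorem fderiv_apply_fderiv_of_eventually_leftInverse
    {𝕜 E E' : Type*} [NontriviallyNormedField 𝕜]
    [NormedAddCommGroup E] [NormedSpace 𝕜 E] [NormedAddCommGroup E'] [NormedSpace 𝕜 E']
    {F : E → E'} {G : E' → E} {u : E}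
    (hF : DifferentiableAt 𝕜 F u) (hG : DifferentiableAt 𝕜 G (F u))
    (hGF : ∀ᶠ x in 𝓝 u, G (F x) = x) (x : E) :
    fderiv 𝕜 G (F u) (fderiv 𝕜 F u x) = x := by
  have hcomp : fderiv 𝕜 (G ∘ F) u = (fderiv 𝕜 G (F u)).comp (fderiv 𝕜 F u) :=
    fderiv_comp u hG hF
  have hid : fderiv 𝕜 (G ∘ F) u = ContinuousLinearMap.id 𝕜 E := by
    have hGF' : G ∘ F =ᶠ[𝓝 u] id := hGF
    rw [hGF'.fderiv_eq, fderiv_id]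
  exact congrArg (· x) (hcomp.symm.trans hid)

theorem dissection_chart_independent_general
    {E E' : Type*} [NormedAddCommGroup E] [NormedSpace ℝ E]
    [NormedAddCommGroup E'] [NormedSpace ℝ E']
    (U : Set E) (V : Set E') (hU : IsOpen U)
    (F : E → E') (G : E' → E)
    (hF : ∀ u ∈ U, ContDiffAt ℝ 2 F u) (hG : ∀ v ∈ V, DifferentiableAt ℝ G v)
    (hmapG : Set.MapsTo G V U)
    (hGF : ∀ u ∈ U, G (F u) = u) (hFG : ∀ v ∈ V, F (G v) = v)
    (v : E') (hv : v ∈ V)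
    (α : E →L[ℝ] ℝ) (Γu : E →L[ℝ] E →L[ℝ] E)
    (B : E → E → ℝ) (hB : ∀ e₁ e₂ : E, B e₁ e₂ = α (Γu e₁ e₂)) :
    ∀ e₁' e₂' : E',
      B (fderiv ℝ G v e₁') (fderiv ℝ G v e₂') +
          α (fderiv ℝ G v
            (fderiv ℝ (fderiv ℝ F) (G v) (fderiv ℝ G v e₁') (fderiv ℝ G v e₂'))) =
        (α.comp (fderiv ℝ G v))
          (fderiv ℝ (fderiv ℝ F) (G v) (fderiv ℝ G v e₁') (fderiv ℝ G v e₂') +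
            fderiv ℝ F (G v) (Γu (fderiv ℝ G v e₁') (fderiv ℝ G v e₂'))) := by
  intro e₁' e₂'
  have hu : G v ∈ U := hmapG hv
  have hGd : DifferentiableAt ℝ G (F (G v)) := by
    rw [hFG v hv]
    exact hG v hv
  have hDGDF : ∀ x, fderiv ℝ G v (fderiv ℝ F (G v) x) = x := by
    have h := fderiv_apply_fderiv_of_eventually_leftInverse
      ((hF _ hu).differentiableAt (by norm_num)) hGd
      (eventually_of_mem (hU.mem_nhds hu) hGF)
    rwa [hFG v hv] at h
  rw [ContinuousLinearMap.comp_apply, map_add, map_add, hDGDF, hB, add_comm]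

/-- Dissection subspaces are mapped to dissection subspaces under change of chart: if
`B = α ∘ Γ(u)`, then the 2-jet transform `B' = B ∘ (DG×DG) + α ∘ DG(v) ∘ D²F(u) ∘ (DG×DG)`
equals `α' ∘ Γ'(v)`, where `α' = α ∘ DG(v)` and
`Γ'(v) = D²F(u) ∘ (DG×DG) + DF(u) ∘ Γ(u) ∘ (DG×DG)`, with `u = G(v)`. -/
theorem dissection_chart_independent
    {E E' : Type*} [NormedAddCommGroup E] [NormedSpace ℝ E]
    [NormedAddCommGroup E'] [NormedSpace ℝ E']
    (U : Set E) (V : Set E') (hU : IsOpen U) (hV : IsOpen V)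
    (F : E → E') (G : E' → E)
    (hF : ∀ u ∈ U, ContDiffAt ℝ 2 F u) (hG : ∀ v ∈ V, DifferentiableAt ℝ G v)
    (hmapF : Set.MapsTo F U V) (hmapG : Set.MapsTo G V U)
    (hGF : ∀ u ∈ U, G (F u) = u) (hFG : ∀ v ∈ V, F (G v) = v)
    (v : E') (hv : v ∈ V)
    (α : E →L[ℝ] ℝ) (Γu : E →L[ℝ] E →L[ℝ] E)
    (hΓsym : ∀ e₁ e₂ : E, Γu e₁ e₂ = Γu e₂ e₁)
    (B : E → E → ℝ) (hB : ∀ e₁ e₂ : E, B e₁ e₂ = α (Γu e₁ e₂)) :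
    ∀ e₁' e₂' : E',
      B (fderiv ℝ G v e₁') (fderiv ℝ G v e₂') +
          α (fderiv ℝ G v
            (fderiv ℝ (fderiv ℝ F) (G v) (fderiv ℝ G v e₁') (fderiv ℝ G v e₂'))) =
        (α.comp (fderiv ℝ G v))
          (fderiv ℝ (fderiv ℝ F) (G v) (fderiv ℝ G v e₁') (fderiv ℝ G v e₂') +
            fderiv ℝ F (G v) (Γu (fderiv ℝ G v e₁') (fderiv ℝ G v e₂'))) :=
  dissection_chart_independent_general U V hU F G hF hG hmapG hGF hFG v hv α Γu B hB
end
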